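/- Let P = cl(⋃_k P_k) ⊆ ℝⁿ where each P_k is finite with #P_k ≤ C·δ_k^{-1}, δ_k = 2^{-2^{k²}}, and P_{k+1} is contained in the 2δ_k-neighbourhood of P_{k-1} for all k ≥ 1. Then the Hausdorff dimension of P is 0. -/

import Mathlib

/-!
Because `2δ_{k+1} ≤ δ_k`, chaining the hypothesis `P_{k+1} ⊆ (P_{k-1})_{2δ_k}` along indices of
one parity gives `P_{k+1+2m} ⊆ (P_{k-1})_{4δ_k}`. Hence, for each `k`, the closure of `⋃ P_j` is
covered by at most `2C/δ_{k-1}` balls of radius `4δ_k` centred in `P_0 ∪ ⋯ ∪ P_{k-1}` and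
`C/δ_k` balls of radius `4δ_{k+1}` centred in `P_k`. For `d > 0` this bounds `μH[d]` by
`O(δ_k^d/δ_{k-1} + δ_{k+1}^d/δ_k)`, which tends to `0` since `δ_{k+1} = δ_k ^ 2^{2k+1}`.
-/

open Metric Set

/-- The rapidly decreasing sequence `δ_k = 2^{-2^{k²}}`. -/
noncomputable def deltaSeq (k : ℕ) : ℝ := 1 / 2 ^ (2 ^ (k ^ 2))

open Filter Topology MeasureTheory

lemma dimH_eq_zero_of_forall_hausdorffMeasure_eq_zero {X : Type*} [EMetricSpace X]
    [MeasurableSpace X] [BorelSpace X] {s : Set X} (h : ∀ d : NNReal, 0 < d → μH[d] s = 0) :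
    dimH s = 0 :=
  le_antisymm (ENNReal.le_of_forall_pos_le_add fun d hd _ =>
    (dimH_le_of_hausdorffMeasure_ne_top (by simp [h d hd])).trans_eq (zero_add _).symm) bot_le

section HausdorffMeasure

variable {X : Type*} [MetricSpace X]

lemma ediam_closedBall_le_ofReal (x : X) (r : ℝ) :
    ediam (closedBall x r) ≤ ENNReal.ofReal (2 * r) :=
  ediam_le_of_forall_dist_le fun _ hy _ hz =>
    (dist_triangle_right _ _ x).trans (by linarith [mem_closedBall.mp hy, mem_closedBall.mp hz])

lemma sum_ediam_closedBall_rpow_le {s : Set X} (hs : s.Finite) {r d : ℝ} (hr : 0 ≤ r)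
    (hd : 0 ≤ d) :
    ∑ x : hs.toFinset, ediam (closedBall (x : X) r) ^ d ≤
      ENNReal.ofReal (s.ncard * (2 * r) ^ d) :=
  calc ∑ x : hs.toFinset, ediam (closedBall (x : X) r) ^ d
      ≤ ∑ _x : hs.toFinset, ENNReal.ofReal (2 * r) ^ d :=
        Finset.sum_le_sum fun x _ => ENNReal.rpow_le_rpow (ediam_closedBall_le_ofReal _ _) hd
    _ = ENNReal.ofReal (s.ncard * (2 * r) ^ d) := by
        rw [Finset.sum_const, Finset.card_univ, Fintype.card_coe, nsmul_eq_mul,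
          ENNReal.ofReal_rpow_of_nonneg (by positivity) hd, ENNReal.ofReal_mul (by positivity),
          ENNReal.ofReal_natCast, Set.ncard_eq_toFinset_card s hs]

lemma cthickening_subset_iUnion_closedBall_of_finite {s : Set X} (hs : s.Finite) {r : ℝ}
    (hr : 0 ≤ r) : cthickening r s ⊆ ⋃ x : hs.toFinset, closedBall (x : X) r := by
  rw [hs.isCompact.cthickening_eq_biUnion_closedBall hr]
  exact iUnion₂_subset fun x hx => subset_iUnion_of_subset ⟨x, by simpa using hx⟩ subset_rfl

variable [MeasurableSpace X] [BorelSpace X]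

theorem hausdorffMeasure_eq_zero_of_two_scale_cover {d : ℝ} (hd : 0 ≤ d) {S : Set X}
    {A B : ℕ → Set X} (hA : ∀ k, (A k).Finite) (hB : ∀ k, (B k).Finite) {a b : ℕ → ℝ}
    (ha0 : ∀ k, 0 ≤ a k) (hb0 : ∀ k, 0 ≤ b k) (ha : Tendsto a atTop (𝓝 0))
    (hb : Tendsto b atTop (𝓝 0))
    (hS : ∀ k, S ⊆ cthickening (a k) (A k) ∪ cthickening (b k) (B k))
    (hsum : Tendsto (fun k => (A k).ncard * a k ^ d + (B k).ncard * b k ^ d) atTop (𝓝 0)) :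
    μH[d] S = 0 := by
  let t : ∀ k, ((hA k).toFinset ⊕ (hB k).toFinset) → Set X := fun k =>
    Sum.elim (fun x => closedBall x (a k)) (fun x => closedBall x (b k))
  have hr : Tendsto (fun k => ENNReal.ofReal (2 * max (a k) (b k))) atTop (𝓝 0) := by
    simpa using ENNReal.tendsto_ofReal ((ha.max hb).const_mul 2)
  have hdiam : ∀ k i, ediam (t k i) ≤ ENNReal.ofReal (2 * max (a k) (b k)) := by
    rintro k (x | x) <;> refine (ediam_closedBall_le_ofReal _ _).trans (ENNReal.ofReal_le_ofReal ?_)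
      <;> simp
  have hcover (k : ℕ) : S ⊆ ⋃ i, t k i :=
    (hS k).trans <| union_subset
      ((cthickening_subset_iUnion_closedBall_of_finite (hA k) (ha0 k)).trans
        (iUnion_subset fun x => subset_iUnion (t k) (.inl x)))
      ((cthickening_subset_iUnion_closedBall_of_finite (hB k) (hb0 k)).trans
        (iUnion_subset fun x => subset_iUnion (t k) (.inr x)))
  have hsum_le : ∀ k, ∑ i, ediam (t k i) ^ d ≤
      ENNReal.ofReal (2 ^ d * ((A k).ncard * a k ^ d + (B k).ncard * b k ^ d)) := by
    intro k
    have ha0k := ha0 k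
    have hb0k := hb0 k
    rw [Fintype.sum_sum_type, mul_add, ENNReal.ofReal_add (by positivity) (by positivity),
      mul_left_comm, ← Real.mul_rpow zero_le_two (ha0 k), mul_left_comm (2 ^ d),
      ← Real.mul_rpow zero_le_two (hb0 k)]
    exact add_le_add (sum_ediam_closedBall_rpow_le (hA k) (ha0 k) hd)
      (sum_ediam_closedBall_rpow_le (hB k) (hb0 k) hd)
  have hlim : Tendsto (fun k => ENNReal.ofReal
      (2 ^ d * ((A k).ncard * a k ^ d + (B k).ncard * b k ^ d))) atTop (𝓝 0) := by
    simpa using ENNReal.tendsto_ofReal (hsum.const_mul (2 ^ d))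
  refine le_antisymm ?_ bot_le
  calc μH[d] S ≤ liminf (fun k => ∑ i, ediam (t k i) ^ d) atTop :=
        Measure.hausdorffMeasure_le_liminf_sum d S _ hr t (.of_forall hdiam) (.of_forall hcover)
    _ ≤ liminf _ atTop := liminf_le_liminf (.of_forall hsum_le)
    _ = 0 := hlim.liminf_eq

end HausdorffMeasure

section Chain

variable {X : Type*} [PseudoMetricSpace X] {P : ℕ → Set X} {ε : ℕ → ℝ}

lemma subset_cthickening_of_add_two_mul (hε0 : ∀ k, 0 ≤ ε k) (hε : ∀ k, 2 * ε (k + 1) ≤ ε k)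
    (hP : ∀ k, P (k + 2) ⊆ cthickening (2 * ε (k + 1)) (P k)) (m k : ℕ) :
    P (k + 2 + 2 * m) ⊆ cthickening (4 * ε (k + 1)) (P k) := by
  induction m generalizing k with
  | zero => exact (hP k).trans (cthickening_mono (by linarith [hε0 (k + 1)]) _)
  | succ m ih =>
    calc P (k + 2 + 2 * (m + 1)) = P (k + 2 + 2 + 2 * m) := by ring_nf
      _ ⊆ cthickening (4 * ε (k + 3)) (cthickening (2 * ε (k + 1)) (P k)) :=
        (ih (k + 2)).trans (cthickening_subset_of_subset _ (hP k))
      _ ⊆ cthickening (4 * ε (k + 3) + 2 * ε (k + 1)) (P k) :=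
        cthickening_cthickening_subset (by linarith [hε0 (k + 3)]) (by linarith [hε0 (k + 1)]) _
      _ ⊆ cthickening (4 * ε (k + 1)) (P k) :=
        cthickening_mono (by linarith [hε0 (k + 1), hε (k + 1), hε (k + 2)]) _

lemma iUnion_subset_cthickening_union_cthickening (hε0 : ∀ k, 0 ≤ ε k)
    (hε : ∀ k, 2 * ε (k + 1) ≤ ε k) (hP : ∀ k, P (k + 2) ⊆ cthickening (2 * ε (k + 1)) (P k))
    (k : ℕ) :
    ⋃ j, P j ⊆ cthickening (4 * ε (k + 1)) (⋃ i ∈ Finset.range (k + 1), P i) ∪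
      cthickening (4 * ε (k + 2)) (P (k + 1)) := by
  refine iUnion_subset fun j => ?_
  obtain hj | rfl | hj := lt_trichotomy j (k + 1)
  · exact (subset_biUnion_of_mem (Finset.mem_range.mpr hj)).trans
      ((self_subset_cthickening _).trans subset_union_left)
  · exact (self_subset_cthickening _).trans subset_union_right
  obtain ⟨m, hm | hm⟩ := Nat.even_or_odd' (j - (k + 2))
  · obtain rfl : j = k + 2 + 2 * m := by omega
    exact (subset_cthickening_of_add_two_mul hε0 hε hP m k).trans
      ((cthickening_subset_of_subset _ (subset_biUnion_of_mem (by simp))).trans subset_union_left)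
  · obtain rfl : j = k + 1 + 2 + 2 * m := by omega
    exact (subset_cthickening_of_add_two_mul hε0 hε hP m (k + 1)).trans subset_union_right

end Chain

lemma sum_range_succ_le_two_mul {u : ℕ → ℝ} (h0 : 0 ≤ u 0) (hu : ∀ k, 2 * u k ≤ u (k + 1))
    (k : ℕ) : ∑ i ∈ Finset.range (k + 1), u i ≤ 2 * u k := by
  induction k with
  | zero => rw [Finset.sum_range_one]; linarith
  | succ k ih => rw [Finset.sum_range_succ]; linarith [hu k]

lemma deltaSeq_eq_half_pow (k : ℕ) : deltaSeq k = (1 / 2) ^ 2 ^ k ^ 2 := by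
  rw [deltaSeq, one_div_pow]

lemma deltaSeq_pos (k : ℕ) : 0 < deltaSeq k := by
  rw [deltaSeq]; positivity

lemma deltaSeq_le_half (k : ℕ) : deltaSeq k ≤ 1 / 2 := by
  rw [deltaSeq_eq_half_pow]
  exact pow_le_of_le_one (by norm_num) (by norm_num) (by positivity)

lemma deltaSeq_succ (k : ℕ) : deltaSeq (k + 1) = deltaSeq k ^ 2 ^ (2 * k + 1) := by
  rw [deltaSeq_eq_half_pow, deltaSeq_eq_half_pow, ← pow_mul, ← pow_add]
  ring_nf

lemma two_mul_deltaSeq_succ_le (k : ℕ) : 2 * deltaSeq (k + 1) ≤ deltaSeq k := by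
  have hsq : deltaSeq (k + 1) ≤ deltaSeq k ^ 2 := by
    rw [deltaSeq_succ]
    exact pow_le_pow_of_le_one (deltaSeq_pos k).le ((deltaSeq_le_half k).trans (by norm_num))
      (Nat.le_self_pow (by omega) 2)
  nlinarith [deltaSeq_pos k, deltaSeq_le_half k]

lemma two_mul_inv_deltaSeq_le (k : ℕ) : 2 * (deltaSeq k)⁻¹ ≤ (deltaSeq (k + 1))⁻¹ := by
  calc 2 * (deltaSeq k)⁻¹ = (deltaSeq k / 2)⁻¹ := by rw [inv_div, div_eq_mul_inv]
    _ ≤ (deltaSeq (k + 1))⁻¹ :=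
      inv_anti₀ (deltaSeq_pos _) (by linarith [two_mul_deltaSeq_succ_le k])

lemma tendsto_deltaSeq : Tendsto deltaSeq atTop (𝓝 0) := by
  refine Tendsto.congr (fun k => (deltaSeq_eq_half_pow k).symm) ?_
  exact (tendsto_pow_atTop_nhds_zero_of_lt_one (by norm_num) (by norm_num)).comp
    ((tendsto_pow_atTop_atTop_of_one_lt one_lt_two).comp (tendsto_pow_atTop two_ne_zero))

lemma tendsto_deltaSeq_succ_rpow_div {d : ℝ} (hd : 0 < d) :
    Tendsto (fun k => deltaSeq (k + 1) ^ d / deltaSeq k) atTop (𝓝 0) := by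
  have hexp : ∀ᶠ k : ℕ in atTop, 2 ≤ (2 : ℝ) ^ (2 * k + 1) * d :=
    ((tendsto_pow_atTop_atTop_of_one_lt one_lt_two).comp
      (tendsto_atTop_mono (fun k => show k ≤ 2 * k + 1 by omega) tendsto_id)).atTop_mul_const hd
      |>.eventually_ge_atTop 2
  refine squeeze_zero' (.of_forall fun k =>
    div_nonneg (Real.rpow_nonneg (deltaSeq_pos _).le _) (deltaSeq_pos k).le) ?_ tendsto_deltaSeq
  filter_upwards [hexp] with k hk
  have hδ := deltaSeq_pos k
  rw [deltaSeq_succ, ← Real.rpow_natCast_mul hδ.le, ← Real.rpow_sub_one hδ.ne', Nat.cast_pow,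
    Nat.cast_ofNat]
  calc deltaSeq k ^ ((2 : ℝ) ^ (2 * k + 1) * d - 1) ≤ deltaSeq k ^ (1 : ℝ) :=
        Real.rpow_le_rpow_of_exponent_ge hδ ((deltaSeq_le_half k).trans (by norm_num)) (by linarith)
    _ = deltaSeq k := Real.rpow_one _

lemma tendsto_mul_rpow_deltaSeq_succ {N : ℕ → ℝ} {C c d : ℝ} (hd : 0 < d) (hc : 0 ≤ c)
    (hN0 : ∀ k, 0 ≤ N k) (hN : ∀ k, N k ≤ C / deltaSeq k) :
    Tendsto (fun k => N k * (c * deltaSeq (k + 1)) ^ d) atTop (𝓝 0) := by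
  have hlim := (tendsto_deltaSeq_succ_rpow_div hd).const_mul (C * c ^ d)
  rw [mul_zero] at hlim
  refine squeeze_zero (fun k => mul_nonneg (hN0 k)
    (Real.rpow_nonneg (mul_nonneg hc (deltaSeq_pos _).le) _)) (fun k => ?_) hlim
  calc N k * (c * deltaSeq (k + 1)) ^ d ≤ C / deltaSeq k * (c * deltaSeq (k + 1)) ^ d :=
        mul_le_mul_of_nonneg_right (hN k) (Real.rpow_nonneg (mul_nonneg hc (deltaSeq_pos _).le) _)
    _ = C * c ^ d * (deltaSeq (k + 1) ^ d / deltaSeq k) := by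
        rw [Real.mul_rpow hc (deltaSeq_pos _).le]; ring

lemma ncard_biUnion_range_le_two_mul_div_deltaSeq {α : Type*} {P : ℕ → Set α} {C : ℝ}
    (hcard : ∀ k, ((P k).ncard : ℝ) ≤ C / deltaSeq k) (k : ℕ) :
    ((⋃ i ∈ Finset.range (k + 1), P i).ncard : ℝ) ≤ 2 * C / deltaSeq k := by
  have hC : 0 ≤ C := by
    simpa using (le_div_iff₀ (deltaSeq_pos 0)).mp ((Nat.cast_nonneg _).trans (hcard 0))
  calc ((⋃ i ∈ Finset.range (k + 1), P i).ncard : ℝ)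
      ≤ ∑ i ∈ Finset.range (k + 1), C * (deltaSeq i)⁻¹ := by
        refine (Nat.cast_le.mpr (Finset.set_ncard_biUnion_le _ _)).trans ?_
        push_cast
        exact Finset.sum_le_sum fun i _ => hcard i
    _ ≤ C * (2 * (deltaSeq k)⁻¹) := by
        rw [← Finset.mul_sum]
        exact mul_le_mul_of_nonneg_left (sum_range_succ_le_two_mul
          (inv_nonneg.mpr (deltaSeq_pos 0).le) two_mul_inv_deltaSeq_le k) hC
    _ = 2 * C / deltaSeq k := by ring

theorem dimH_zero_of_rapid_construction (n : ℕ) (C : ℝ)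
    (P : ℕ → Set (EuclideanSpace ℝ (Fin n)))
    (hfin : ∀ k, (P k).Finite)
    (hcard : ∀ k, ((P k).ncard : ℝ) ≤ C / deltaSeq k)
    (hnb : ∀ k, 1 ≤ k → P (k + 1) ⊆ Metric.cthickening (2 * deltaSeq k) (P (k - 1))) :
    dimH (closure (⋃ k, P k)) = 0 := by
  have hcover (k : ℕ) : closure (⋃ j, P j) ⊆
      cthickening (4 * deltaSeq (k + 1)) (⋃ i ∈ Finset.range (k + 1), P i) ∪
        cthickening (4 * deltaSeq (k + 2)) (P (k + 1)) :=
    closure_minimal (iUnion_subset_cthickening_union_cthickening (fun k => (deltaSeq_pos k).le)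
      two_mul_deltaSeq_succ_le (fun k => hnb (k + 1) k.succ_pos) k)
      (isClosed_cthickening.union isClosed_cthickening)
  have hradius (j : ℕ) : Tendsto (fun k => 4 * deltaSeq (k + j)) atTop (𝓝 0) := by
    simpa using (tendsto_deltaSeq.comp (tendsto_add_atTop_nat j)).const_mul 4
  refine dimH_eq_zero_of_forall_hausdorffMeasure_eq_zero fun d hd => ?_
  refine hausdorffMeasure_eq_zero_of_two_scale_cover d.2
    (fun k => (Finset.range (k + 1)).finite_toSet.biUnion fun i _ => hfin i)
    (fun k => hfin (k + 1)) (fun k => (mul_pos four_pos (deltaSeq_pos _)).le)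
    (fun k => (mul_pos four_pos (deltaSeq_pos _)).le)
    (hradius 1) (hradius 2) hcover ?_
  simpa using
    (tendsto_mul_rpow_deltaSeq_succ hd four_pos.le (fun k => Nat.cast_nonneg _)
      (ncard_biUnion_range_le_two_mul_div_deltaSeq hcard)).add
      ((tendsto_mul_rpow_deltaSeq_succ hd four_pos.le (fun k => Nat.cast_nonneg _) hcard).comp
        (tendsto_add_atTop_nat 1))
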